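/- arXiv:math/9606210 — 3 statements merged into one kernel-verified Lean document; each statement's English description precedes it below -/
import Mathlib

section
/- Let E be an L-space and let F be a Banach lattice with a Levi norm. Then every continuous linear operator T : E → F is regular, i.e., T is the difference of two positive continuous linear operators from E to F. -/
/-!
For `x ≥ 0` consider the sums `∑ (T yᵢ)⁺` over all decompositions `x = ∑ yᵢ` into positive
parts. Riesz decomposition gives any two decompositions a common refinement, and refining only
increases such a sum, so these sums form an upward directed set; since the norm of an L-space is
additive on the cone, they are bounded in norm by `‖T‖ ‖x‖`. The Levi property provides their
supremum `P x`, which is additive and positively homogeneous on the cone, so `P` extends to a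
positive linear operator with `T ≤ P`. Positive operators between Banach lattices are bounded,
hence `T = P - (P - T)` with both operators positive and continuous.
-/

/-- A Banach lattice has a *Levi norm* if every norm-bounded upward directed
(nonempty) set of positive elements has a supremum. -/
def HasLeviNorm (E : Type*) [NormedAddCommGroup E] [Lattice E] : Prop :=
  ∀ A : Set E, A.Nonempty → (∀ x ∈ A, 0 ≤ x) → DirectedOn (· ≤ ·) A →
    (∃ M : ℝ, ∀ x ∈ A, ‖x‖ ≤ M) → ∃ s : E, IsLUB A s

/-- A Banach lattice has a *sequentially Levi norm* if every norm-bounded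
increasing sequence of positive elements has a supremum. -/
def HasSeqLeviNorm (E : Type*) [NormedAddCommGroup E] [Lattice E] : Prop :=
  ∀ x : ℕ → E, (∀ n, 0 ≤ x n) → Monotone x → (∃ M : ℝ, ∀ n, ‖x n‖ ≤ M) →
    ∃ s : E, IsLUB (Set.range x) s
/-- An operator between ordered spaces is *positive* if it maps positive
elements to positive elements. -/
def IsPositiveOp {E F : Type*} [NormedAddCommGroup E] [NormedSpace ℝ E] [Lattice E]
    [NormedAddCommGroup F] [NormedSpace ℝ F] [Lattice F] (T : E →L[ℝ] F) : Prop :=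
  ∀ x : E, 0 ≤ x → 0 ≤ T x

/-- An operator is *regular* if it is the difference of two positive continuous
linear operators. -/
def IsRegularOp {E F : Type*} [NormedAddCommGroup E] [NormedSpace ℝ E] [Lattice E]
    [NormedAddCommGroup F] [NormedSpace ℝ F] [Lattice F] (T : E →L[ℝ] F) : Prop :=
  ∃ P Q : E →L[ℝ] F, IsPositiveOp P ∧ IsPositiveOp Q ∧ T = P - Q

open Filter Topology
open scoped Pointwise

section LatticeOrderedGroup

variable {α ι κ : Type*} [Lattice α] [AddCommGroup α] [IsOrderedAddMonoid α]

lemma posPart_add_le (a b : α) : (a + b)⁺ ≤ a⁺ + b⁺ :=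
  sup_le (add_le_add (le_posPart a) (le_posPart b))
    (add_nonneg (posPart_nonneg a) (posPart_nonneg b))

lemma posPart_sum_le (s : Finset ι) (f : ι → α) : (∑ i ∈ s, f i)⁺ ≤ ∑ i ∈ s, (f i)⁺ :=
  Finset.le_sum_of_subadditive _ posPart_zero.le posPart_add_le s f

/-- Riesz decomposition property of lattice-ordered groups. -/
theorem exists_le_sum_eq_of_le_sum {s : Finset ι} {y : ι → α} (hy : ∀ i ∈ s, 0 ≤ y i) {c : α}
    (hc : 0 ≤ c) (hcy : c ≤ ∑ i ∈ s, y i) :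
    ∃ d : ι → α, (∀ i ∈ s, 0 ≤ d i ∧ d i ≤ y i) ∧ ∑ i ∈ s, d i = c := by
  classical
  induction s using Finset.induction_on generalizing c with
  | empty =>
    obtain rfl : c = 0 := le_antisymm (by simpa using hcy) hc
    exact ⟨0, by simp, by simp⟩
  | insert k s hk ih =>
    rw [Finset.sum_insert hk] at hcy
    have hyk := hy k (Finset.mem_insert_self k s)
    have hys : ∀ i ∈ s, 0 ≤ y i := fun i hi => hy i (Finset.mem_insert_of_mem hi)
    obtain ⟨d, hd, hdsum⟩ := ih hys (posPart_nonneg (c - y k))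
      (sup_le (sub_le_iff_le_add'.2 hcy) (Finset.sum_nonneg hys))
    refine ⟨Function.update d k (c ⊓ y k), fun i hi => ?_, ?_⟩
    · rcases eq_or_ne i k with rfl | hik
      · simpa using le_inf hc hyk
      · simpa [hik] using hd i (Finset.mem_of_mem_insert_of_ne hi hik)
    · rw [Finset.sum_insert hk, Finset.sum_update_of_notMem hk, hdsum, Function.update_self,
        inf_eq_sub_posPart_sub, sub_add_cancel]

theorem exists_nonneg_sum_eq_of_sum_eq {s : Finset ι} {t : Finset κ} {y : ι → α} {y' : κ → α}
    (hy : ∀ i ∈ s, 0 ≤ y i) (hy' : ∀ j ∈ t, 0 ≤ y' j) (h : ∑ i ∈ s, y i = ∑ j ∈ t, y' j) :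
    ∃ z : ι → κ → α, (∀ i ∈ s, ∀ j ∈ t, 0 ≤ z i j) ∧ (∀ i ∈ s, ∑ j ∈ t, z i j = y i) ∧
      ∀ j ∈ t, ∑ i ∈ s, z i j = y' j := by
  classical
  induction s using Finset.induction_on generalizing y' with
  | empty =>
    have hzero := (Finset.sum_eq_zero_iff_of_nonneg hy').1 (by simpa using h.symm)
    exact ⟨0, by simp, by simp, fun j hj => by simp [hzero j hj]⟩
  | insert k s hk ih =>
    rw [Finset.sum_insert hk] at h
    have hys : ∀ i ∈ s, 0 ≤ y i := fun i hi => hy i (Finset.mem_insert_of_mem hi)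
    obtain ⟨d, hd, hdsum⟩ := exists_le_sum_eq_of_le_sum hy' (hy k (Finset.mem_insert_self k s))
      ((le_add_of_nonneg_right (Finset.sum_nonneg hys)).trans_eq h)
    obtain ⟨z, hz, hrow, hcol⟩ := ih (y' := fun j => y' j - d j) hys
      (fun j hj => sub_nonneg.2 (hd j hj).2)
      (by rw [Finset.sum_sub_distrib, hdsum, ← h, add_sub_cancel_left])
    refine ⟨Function.update z k d, fun i hi j hj => ?_, fun i hi => ?_, fun j hj => ?_⟩
    · rcases eq_or_ne i k with rfl | hik
      · simpa using (hd j hj).1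
      · simpa [hik] using hz i (Finset.mem_of_mem_insert_of_ne hi hik) j hj
    · rcases eq_or_ne i k with rfl | hik
      · simpa using hdsum
      · simpa [hik] using hrow i (Finset.mem_of_mem_insert_of_ne hi hik)
    · have hs : ∑ i ∈ s, Function.update z k d i j = ∑ i ∈ s, z i j :=
        Finset.sum_congr rfl fun i hi => by rw [Function.update_of_ne (ne_of_mem_of_not_mem hi hk)]
      rw [Finset.sum_insert hk, hs, hcol j hj, Function.update_self, add_sub_cancel]

end LatticeOrderedGroup

lemma posPart_smul_of_pos {E : Type*} [Lattice E] [AddCommGroup E] [Module ℝ E]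
    [PosSMulMono ℝ E] {c : ℝ} (hc : 0 < c) (a : E) : (c • a)⁺ = c • a⁺ := by
  have h := (OrderIso.smulRight hc).map_sup a 0
  simp only [OrderIso.smulRight_apply, smul_zero] at h
  rw [posPart_def, posPart_def, h]

section LinearExtension

variable {E F : Type*} [Lattice E] [AddCommGroup E] [IsOrderedAddMonoid E] [AddCommGroup F]
  {p : E → F}

lemma map_posPart_sub_map_negPart_sub (hadd : ∀ u v, 0 ≤ u → 0 ≤ v → p (u + v) = p u + p v)
    {u v : E} (hu : 0 ≤ u) (hv : 0 ≤ v) :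
    p (u - v)⁺ - p (u - v)⁻ = p u - p v := by
  rw [sub_eq_sub_iff_add_eq_add, ← hadd _ _ (posPart_nonneg _) hv,
    ← hadd _ _ hu (negPart_nonneg _)]
  congr 1
  rw [← sub_eq_sub_iff_add_eq_add, posPart_sub_negPart]

variable [Module ℝ E] [PosSMulMono ℝ E] [Module ℝ F]
  (hadd : ∀ u v, 0 ≤ u → 0 ≤ v → p (u + v) = p u + p v)
  (hsmul : ∀ c : ℝ, 0 < c → ∀ x, 0 ≤ x → p (c • x) = c • p x)

def LinearMap.ofNonnegAdditive : E →ₗ[ℝ] F where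
  toFun x := p x⁺ - p x⁻
  map_add' x y := by
    have hxy : x + y = (x⁺ + y⁺) - (x⁻ + y⁻) := by
      rw [add_sub_add_comm, posPart_sub_negPart, posPart_sub_negPart]
    rw [hxy, map_posPart_sub_map_negPart_sub hadd
        (add_nonneg (posPart_nonneg x) (posPart_nonneg y))
        (add_nonneg (negPart_nonneg x) (negPart_nonneg y)),
      hadd _ _ (posPart_nonneg x) (posPart_nonneg y),
      hadd _ _ (negPart_nonneg x) (negPart_nonneg y)]
    abel
  map_smul' c x := by
    rw [RingHom.id_apply]
    rcases lt_trichotomy c 0 with hc | rfl | hc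
    · have hcx : c • x = (-c) • x⁻ - (-c) • x⁺ := by
        rw [← smul_sub, ← neg_sub, posPart_sub_negPart, smul_neg, neg_smul, neg_neg]
      have hc' : 0 < -c := neg_pos.2 hc
      rw [hcx, map_posPart_sub_map_negPart_sub hadd (smul_nonneg hc'.le (negPart_nonneg x))
          (smul_nonneg hc'.le (posPart_nonneg x)),
        hsmul _ hc' _ (negPart_nonneg x), hsmul _ hc' _ (posPart_nonneg x), ← smul_sub,
        neg_smul, ← smul_neg, neg_sub]
    · simp
    · have hcx : c • x = c • x⁺ - c • x⁻ := by rw [← smul_sub, posPart_sub_negPart]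
      rw [hcx, map_posPart_sub_map_negPart_sub hadd (smul_nonneg hc.le (posPart_nonneg x))
          (smul_nonneg hc.le (negPart_nonneg x)),
        hsmul _ hc _ (posPart_nonneg x), hsmul _ hc _ (negPart_nonneg x), smul_sub]

lemma LinearMap.ofNonnegAdditive_apply_of_nonneg {x : E} (hx : 0 ≤ x) :
    LinearMap.ofNonnegAdditive hadd hsmul x = p x := by
  have hp0 : p 0 = 0 := by simpa using hadd 0 0 le_rfl le_rfl
  simp [LinearMap.ofNonnegAdditive, posPart_of_nonneg hx, negPart_of_nonneg hx, hp0]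

end LinearExtension

section PosPartSums

variable {E F : Type*} [Lattice E] [AddCommGroup E] [Module ℝ E] [Lattice F] [AddCommGroup F]
  [Module ℝ F]

/-- Its supremum, when it exists, is `T⁺ x` (Riesz–Kantorovich formula). -/
def posPartSums (T : E →ₗ[ℝ] F) (x : E) : Set F :=
  {z | ∃ (ι : Type) (s : Finset ι) (y : ι → E),
    (∀ i ∈ s, 0 ≤ y i) ∧ ∑ i ∈ s, y i = x ∧ ∑ i ∈ s, (T (y i))⁺ = z}

variable (T : E →ₗ[ℝ] F)

lemma posPart_mem_posPartSums {x : E} (hx : 0 ≤ x) : (T x)⁺ ∈ posPartSums T x :=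
  ⟨Unit, {()}, fun _ => x, by simpa using hx, by simp, by simp⟩

lemma add_mem_posPartSums {u v : E} {a b : F} (ha : a ∈ posPartSums T u)
    (hb : b ∈ posPartSums T v) : a + b ∈ posPartSums T (u + v) := by
  obtain ⟨ι, s, y, hy, rfl, rfl⟩ := ha
  obtain ⟨κ, t, y', hy', rfl, rfl⟩ := hb
  exact ⟨ι ⊕ κ, s.disjSum t, Sum.elim y y', by simpa using ⟨hy, hy'⟩,
    by simp [Finset.sum_disjSum], by simp [Finset.sum_disjSum]⟩

section SMul

variable [PosSMulMono ℝ E] [PosSMulMono ℝ F]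

lemma smul_mem_posPartSums {c : ℝ} (hc : 0 < c) {x : E} {z : F} (hz : z ∈ posPartSums T x) :
    c • z ∈ posPartSums T (c • x) := by
  obtain ⟨ι, s, y, hy, rfl, rfl⟩ := hz
  exact ⟨ι, s, c • y, fun i hi => smul_nonneg hc.le (hy i hi), by simp [Finset.smul_sum],
    by simp [Finset.smul_sum, posPart_smul_of_pos hc]⟩

lemma posPartSums_smul {c : ℝ} (hc : 0 < c) (x : E) :
    posPartSums T (c • x) = c • posPartSums T x := by
  refine subset_antisymm (fun z hz => ⟨c⁻¹ • z, ?_, smul_inv_smul₀ hc.ne' z⟩) ?_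
  · rintro _ ⟨w, hw, rfl⟩
    exact smul_mem_posPartSums T hc hw
  · simpa [inv_smul_smul₀ hc.ne'] using smul_mem_posPartSums T (inv_pos.2 hc) hz

lemma isLUB_posPartSums_smul {c : ℝ} (hc : 0 < c) {x : E} {s : F}
    (hs : IsLUB (posPartSums T x) s) : IsLUB (posPartSums T (c • x)) (c • s) := by
  rw [posPartSums_smul T hc, ← Set.image_smul]
  exact (OrderIso.smulRight hc).isLUB_image'.2 hs

end SMul

variable [IsOrderedAddMonoid F]

lemma nonneg_of_mem_posPartSums {x : E} {z : F} (hz : z ∈ posPartSums T x) : 0 ≤ z := by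
  obtain ⟨ι, s, y, -, -, rfl⟩ := hz
  exact Finset.sum_nonneg fun i _ => posPart_nonneg _

variable [IsOrderedAddMonoid E]

lemma directedOn_posPartSums (x : E) : DirectedOn (· ≤ ·) (posPartSums T x) := by
  rintro _ ⟨ι, s, y, hy, hx, rfl⟩ _ ⟨κ, t, y', hy', hx', rfl⟩
  obtain ⟨z, hz, hrow, hcol⟩ := exists_nonneg_sum_eq_of_sum_eq hy hy' (hx.trans hx'.symm)
  refine ⟨∑ p ∈ s ×ˢ t, (T (z p.1 p.2))⁺,
    ⟨ι × κ, s ×ˢ t, fun p => z p.1 p.2, fun p hp => hz _ (Finset.mem_product.1 hp).1 _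
      (Finset.mem_product.1 hp).2, ?_, rfl⟩, ?_, ?_⟩
  · rw [Finset.sum_product, Finset.sum_congr rfl hrow, hx]
  · rw [Finset.sum_product]
    exact Finset.sum_le_sum fun i hi => by
      rw [← hrow i hi, map_sum]; exact posPart_sum_le _ _
  · rw [Finset.sum_product_right]
    exact Finset.sum_le_sum fun j hj => by
      rw [← hcol j hj, map_sum]; exact posPart_sum_le _ _

lemma exists_le_add_of_mem_posPartSums_add {u v : E} (hu : 0 ≤ u) (hv : 0 ≤ v) {z : F}
    (hz : z ∈ posPartSums T (u + v)) :
    ∃ a ∈ posPartSums T u, ∃ b ∈ posPartSums T v, z ≤ a + b := by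
  obtain ⟨ι, s, y, hy, hsum, rfl⟩ := hz
  obtain ⟨d, hd, hdsum⟩ :=
    exists_le_sum_eq_of_le_sum hy hu ((le_add_of_nonneg_right hv).trans_eq hsum.symm)
  refine ⟨_, ⟨ι, s, d, fun i hi => (hd i hi).1, hdsum, rfl⟩,
    _, ⟨ι, s, fun i => y i - d i, fun i hi => sub_nonneg.2 (hd i hi).2, ?_, rfl⟩, ?_⟩
  · rw [Finset.sum_sub_distrib, hsum, hdsum, add_sub_cancel_left]
  · rw [← Finset.sum_add_distrib]
    refine Finset.sum_le_sum fun i _ => ?_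
    simpa using posPart_add_le (T (d i)) (T (y i - d i))

lemma isLUB_posPartSums_add {u v : E} (hu : 0 ≤ u) (hv : 0 ≤ v) {a b : F}
    (ha : IsLUB (posPartSums T u) a) (hb : IsLUB (posPartSums T v) b) :
    IsLUB (posPartSums T (u + v)) (a + b) := by
  refine ⟨fun z hz => ?_, fun w hw => (ha.add hb).2 ?_⟩
  · obtain ⟨a', ha', b', hb', hz⟩ := exists_le_add_of_mem_posPartSums_add T hu hv hz
    exact hz.trans (add_le_add (ha.1 ha') (hb.1 hb'))
  · rintro _ ⟨a', ha', b', hb', rfl⟩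
    exact hw (add_mem_posPartSums T ha' hb')

variable [PosSMulMono ℝ E] [PosSMulMono ℝ F]

theorem exists_linearMap_isLUB_posPartSums
    (h : ∀ x : E, 0 ≤ x → ∃ s, IsLUB (posPartSums T x) s) :
    ∃ P : E →ₗ[ℝ] F, ∀ x, 0 ≤ x → IsLUB (posPartSums T x) (P x) := by
  choose! p hp using h
  have hadd : ∀ u v, 0 ≤ u → 0 ≤ v → p (u + v) = p u + p v := fun u v hu hv =>
    (hp _ (add_nonneg hu hv)).unique (isLUB_posPartSums_add T hu hv (hp u hu) (hp v hv))
  have hsmul : ∀ c : ℝ, 0 < c → ∀ x, 0 ≤ x → p (c • x) = c • p x := fun c hc x hx =>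
    (hp _ (smul_nonneg hc.le hx)).unique (isLUB_posPartSums_smul T hc (hp x hx))
  refine ⟨LinearMap.ofNonnegAdditive hadd hsmul, fun x hx => ?_⟩
  rw [LinearMap.ofNonnegAdditive_apply_of_nonneg hadd hsmul hx]
  exact hp x hx

end PosPartSums

lemma inv_two_pow_smul_nonneg {E : Type*} [Lattice E] [AddCommGroup E] [IsOrderedAddMonoid E]
    [Module ℝ E] {x : E} (hx : 0 ≤ x) (m : ℕ) : 0 ≤ ((2 : ℝ) ^ m)⁻¹ • x := by
  induction m with
  | zero => simpa using hx
  | succ m ih =>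
    refine nsmul_two_semiclosed ?_
    rwa [← Nat.cast_smul_eq_nsmul ℝ, smul_smul, pow_succ, mul_inv, mul_left_comm,
      Nat.cast_ofNat, mul_inv_cancel₀ two_ne_zero, mul_one]

section SolidNorm

variable {α : Type*} [NormedAddCommGroup α] [Lattice α] [IsOrderedAddMonoid α] [HasSolidNorm α]

lemma norm_posPart_le (a : α) : ‖a⁺‖ ≤ ‖a‖ := by
  refine norm_le_norm_of_abs_le_abs ?_
  rw [abs_of_nonneg (posPart_nonneg a), ← posPart_add_negPart a]
  exact le_add_of_nonneg_right (negPart_nonneg a)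

lemma norm_negPart_le (a : α) : ‖a⁻‖ ≤ ‖a‖ := by
  simpa [posPart_neg] using norm_posPart_le (-a)

variable [NormedSpace ℝ α]

/-- The positive cone is closed and contains the dyadic multiples of its elements. -/
instance HasSolidNorm.toPosSMulMono : PosSMulMono ℝ α :=
  PosSMulMono.of_smul_nonneg fun c hc x hx => by
    have hlim : Tendsto (fun m : ℕ => ((⌊c * 2 ^ m⌋₊ : ℝ) / 2 ^ m) • x) atTop (𝓝 (c • x)) :=
      ((tendsto_nat_floor_mul_div_atTop hc).comp
        (tendsto_pow_atTop_atTop_of_one_lt one_lt_two)).smul_const x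
    refine isClosed_nonneg.mem_of_tendsto hlim (Eventually.of_forall fun m => ?_)
    rw [Set.mem_ofPred_eq, div_eq_mul_inv, ← smul_smul, Nat.cast_smul_eq_nsmul]
    exact nsmul_nonneg (inv_two_pow_smul_nonneg hx m) _

end SolidNorm

section BanachLattice

variable {E F : Type*} [NormedAddCommGroup E] [Lattice E] [IsOrderedAddMonoid E]

lemma norm_sum_of_nonneg (hL : ∀ x y : E, 0 ≤ x → 0 ≤ y → ‖x + y‖ = ‖x‖ + ‖y‖)
    {ι : Type*} (s : Finset ι) {y : ι → E} (hy : ∀ i ∈ s, 0 ≤ y i) :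
    ‖∑ i ∈ s, y i‖ = ∑ i ∈ s, ‖y i‖ := by
  classical
  induction s using Finset.induction_on with
  | empty => simp
  | insert k s hk ih =>
    have hys : ∀ i ∈ s, 0 ≤ y i := fun i hi => hy i (Finset.mem_insert_of_mem hi)
    rw [Finset.sum_insert hk, Finset.sum_insert hk,
      hL _ _ (hy k (Finset.mem_insert_self k s)) (Finset.sum_nonneg hys), ih hys]

variable [NormedSpace ℝ E] [NormedAddCommGroup F] [Lattice F] [IsOrderedAddMonoid F]
  [HasSolidNorm F] [NormedSpace ℝ F]

lemma norm_le_of_mem_posPartSums (hL : ∀ x y : E, 0 ≤ x → 0 ≤ y → ‖x + y‖ = ‖x‖ + ‖y‖)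
    (T : E →L[ℝ] F) {x : E} {z : F} (hz : z ∈ posPartSums (T : E →ₗ[ℝ] F) x) :
    ‖z‖ ≤ ‖T‖ * ‖x‖ := by
  obtain ⟨ι, s, y, hy, rfl, rfl⟩ := hz
  calc ‖∑ i ∈ s, (T (y i))⁺‖ ≤ ∑ i ∈ s, ‖(T (y i))⁺‖ := norm_sum_le _ _
    _ ≤ ∑ i ∈ s, ‖T‖ * ‖y i‖ :=
      Finset.sum_le_sum fun i _ => (norm_posPart_le _).trans (T.le_opNorm _)
    _ = ‖T‖ * ‖∑ i ∈ s, y i‖ := by rw [← Finset.mul_sum, norm_sum_of_nonneg hL s hy]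

variable [HasSolidNorm E] [CompleteSpace E]

lemma LinearMap.exists_cone_bound_of_nonneg (L : E →ₗ[ℝ] F)
    (hL : ∀ x, 0 ≤ x → 0 ≤ L x) : ∃ C, 0 ≤ C ∧ ∀ x, 0 ≤ x → ‖L x‖ ≤ C * ‖x‖ := by
  by_contra! h
  have hu : ∀ n : ℕ, ∃ u, 0 ≤ u ∧ ‖u‖ ≤ (2⁻¹ : ℝ) ^ n ∧ (2 : ℝ) ^ n < ‖L u‖ := by
    intro n
    obtain ⟨g, hg, hlt⟩ := h (4 ^ n) (by positivity)
    have hg0 : 0 < ‖g‖ := norm_pos_iff.2 fun h0 => by simp [h0] at hlt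
    have hr : 0 < (2 ^ n * ‖g‖)⁻¹ := by positivity
    refine ⟨(2 ^ n * ‖g‖)⁻¹ • g, smul_nonneg hr.le hg, le_of_eq ?_, ?_⟩
    · rw [norm_smul, Real.norm_of_nonneg hr.le, inv_pow]
      field_simp
    · rw [map_smul, norm_smul, Real.norm_of_nonneg hr.le]
      calc (2 : ℝ) ^ n = (2 ^ n * ‖g‖)⁻¹ * (4 ^ n * ‖g‖) := by
            rw [show (4 : ℝ) ^ n = 2 ^ n * 2 ^ n by rw [← mul_pow]; norm_num]
            field_simp
        _ < (2 ^ n * ‖g‖)⁻¹ * ‖L g‖ := mul_lt_mul_of_pos_left hlt hr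
  choose u hu0 hun hLu using hu
  -- `u n ≤ ∑' u` and `L` is monotone, so `‖L (∑' u)‖` bounds every `2 ^ n`
  have hsum : Summable u :=
    .of_norm_bounded (summable_geometric_of_lt_one (by norm_num) (by norm_num)) hun
  obtain ⟨n, hn⟩ := pow_unbounded_of_one_lt ‖L (∑' n, u n)‖ one_lt_two
  have hle : L (u n) ≤ L (∑' n, u n) := by
    rw [← sub_nonneg, ← map_sub]
    exact hL _ (sub_nonneg.2 (hsum.le_tsum n fun j _ => hu0 j))
  have hnorm : ‖L (u n)‖ ≤ ‖L (∑' n, u n)‖ := by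
    refine norm_le_norm_of_abs_le_abs ?_
    rwa [abs_of_nonneg (hL _ (hu0 n)), abs_of_nonneg (hL _ (tsum_nonneg hu0))]
  linarith [hLu n]

lemma LinearMap.exists_bound_of_nonneg (L : E →ₗ[ℝ] F)
    (hL : ∀ x, 0 ≤ x → 0 ≤ L x) : ∃ C, ∀ x, ‖L x‖ ≤ C * ‖x‖ := by
  obtain ⟨C, hC0, hC⟩ := L.exists_cone_bound_of_nonneg hL
  refine ⟨2 * C, fun x => ?_⟩
  calc ‖L x‖ = ‖L x⁺ - L x⁻‖ := by rw [← map_sub, posPart_sub_negPart]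
    _ ≤ C * ‖x⁺‖ + C * ‖x⁻‖ :=
      (norm_sub_le _ _).trans (add_le_add (hC _ (posPart_nonneg x)) (hC _ (negPart_nonneg x)))
    _ ≤ C * ‖x‖ + C * ‖x‖ := by gcongr <;> [exact norm_posPart_le x; exact norm_negPart_le x]
    _ = 2 * C * ‖x‖ := by ring

end BanachLattice

theorem kantorovich_vulikh_regular_general
    {E F : Type*}
    [NormedAddCommGroup E] [Lattice E] [IsOrderedAddMonoid E] [HasSolidNorm E] [NormedSpace ℝ E] [CompleteSpace E]
    [NormedAddCommGroup F] [Lattice F] [IsOrderedAddMonoid F] [HasSolidNorm F] [NormedSpace ℝ F]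
    (hLspace : ∀ x y : E, 0 ≤ x → 0 ≤ y → ‖x + y‖ = ‖x‖ + ‖y‖)
    (hLevi : HasLeviNorm F)
    (T : E →L[ℝ] F) :
    IsRegularOp T := by
  obtain ⟨P, hP⟩ := exists_linearMap_isLUB_posPartSums (T : E →ₗ[ℝ] F) fun x hx =>
    hLevi _ ⟨_, posPart_mem_posPartSums _ hx⟩ (fun _ => nonneg_of_mem_posPartSums _)
      (directedOn_posPartSums _ x) ⟨‖T‖ * ‖x‖, fun _ => norm_le_of_mem_posPartSums hLspace T⟩
  have hTP : ∀ x, 0 ≤ x → (T x)⁺ ≤ P x := fun x hx =>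
    (hP x hx).1 (posPart_mem_posPartSums (T : E →ₗ[ℝ] F) hx)
  have hPpos : ∀ x, 0 ≤ x → 0 ≤ P x := fun x hx => (posPart_nonneg _).trans (hTP x hx)
  let P' : E →L[ℝ] F := P.mkContinuousOfExistsBound (P.exists_bound_of_nonneg hPpos)
  exact ⟨P', P' - T, hPpos, fun x hx => sub_nonneg.2 ((le_posPart _).trans (hTP x hx)),
    (sub_sub_cancel _ _).symm⟩

/-- **Kantorovich–Vulikh.** If `E` is an L-space and `F` is a Banach lattice with a
Levi norm, then every continuous linear operator `T : E → F` is regular. -/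
theorem kantorovich_vulikh_regular
    {E F : Type*}
    [NormedAddCommGroup E] [Lattice E] [IsOrderedAddMonoid E] [HasSolidNorm E] [NormedSpace ℝ E] [CompleteSpace E]
    [NormedAddCommGroup F] [Lattice F] [IsOrderedAddMonoid F] [HasSolidNorm F] [NormedSpace ℝ F] [CompleteSpace F]
    (hLspace : ∀ x y : E, 0 ≤ x → 0 ≤ y → ‖x + y‖ = ‖x‖ + ‖y‖)
    (hLevi : HasLeviNorm F)
    (T : E →L[ℝ] F) :
    IsRegularOp T :=
  kantorovich_vulikh_regular_general hLspace hLevi T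
end

section
/- A Dedekind complete vector lattice E is universally complete if and only if every laterally increasing subset of the positive cone E₊ has a supremum in E. -/
/-!
For `⇒`, let `A` be laterally increasing. By Zorn, take a maximal pairwise disjoint set `D` of
components of elements of `A`, and let `s = sup D`. For `a ∈ A`, the positive part
`p = (a - s)⁺` is disjoint from `D`, because every `d ∈ D` is a component of some `c ∈ A`
above `a`. Dedekind completeness gives the projection `u = sup_n (a ⊓ n • p)` of `a` onto the
band generated by `p`, and also makes `E` Archimedean. So `u` is a component of `a`, it lies
above `p`, and it is disjoint from `D`. By maximality `u ∈ D`, so `u ⊓ u = 0`; hence `p = 0`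
and `a ≤ s`. Then `A` is bounded above and has a supremum.

For `⇐`, the finite sums of a pairwise disjoint positive set form a laterally increasing set
with the same upper bounds.
-/

open Finset

lemma Set.exists_maximal_pairwise_subset {α : Type*} {r : α → α → Prop} [Std.Symm r]
    (C : Set α) : ∃ D ⊆ C, D.Pairwise r ∧ ∀ x ∈ C, (∀ d ∈ D, r x d) → x ∈ D := by
  obtain ⟨D, hD⟩ := zorn_subset {D | D ⊆ C ∧ D.Pairwise r} fun c hc hchain =>
    ⟨⋃₀ c, ⟨sUnion_subset fun s hs => (hc hs).1,
      hchain.pairwise_sUnion.2 fun s hs => (hc hs).2⟩, fun s hs => subset_sUnion_of_mem hs⟩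
  refine ⟨D, hD.1.1, hD.1.2, fun x hx hxD => hD.mem_of_prop_insert ?_⟩
  exact ⟨insert_subset hx hD.1.1, pairwise_insert_of_symm.2 ⟨hD.1.2, fun d hd _ => hxD d hd⟩⟩

def DedekindComplete (E : Type*) [Preorder E] : Prop :=
  ∀ A : Set E, A.Nonempty → BddAbove A → ∃ s : E, IsLUB A s

section LatticeOrderedAddCommGroup

variable {E : Type*} [Lattice E] [AddCommGroup E] {a b d p s w x y z : E}

/-- Disjointness of `d` and `a - d` already forces `0 ≤ d ≤ a`. -/
def IsComponent (d a : E) : Prop := d ⊓ (a - d) = 0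

lemma IsComponent.nonneg (h : IsComponent d a) : 0 ≤ d := h ▸ inf_le_left

variable [AddLeftMono E]

lemma inf_add_le_add_inf (hx : 0 ≤ x) (hy : 0 ≤ y) (hz : 0 ≤ z) :
    x ⊓ (y + z) ≤ x ⊓ y + x ⊓ z := by
  suffices x ⊓ (y + z) - x ⊓ y ≤ x ⊓ z by rwa [sub_le_iff_le_add'] at this
  rw [sub_inf]
  refine sup_le ((sub_nonpos.2 inf_le_left).trans (le_inf hx hz)) (le_inf ?_ ?_)
  · exact (sub_le_sub_right inf_le_left y).trans (sub_le_self x hy)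
  · exact (sub_le_sub_right inf_le_right y).trans_eq (add_sub_cancel_left y z)

lemma inf_add_eq_zero (hx : 0 ≤ x) (hy : 0 ≤ y) (hz : 0 ≤ z) (hxy : x ⊓ y = 0)
    (hxz : x ⊓ z = 0) : x ⊓ (y + z) = 0 :=
  le_antisymm (by simpa [hxy, hxz] using inf_add_le_add_inf hx hy hz)
    (le_inf hx (add_nonneg hy hz))

lemma nsmul_inf_eq_zero (hx : 0 ≤ x) (hy : 0 ≤ y) (h : x ⊓ y = 0) (n : ℕ) : n • x ⊓ y = 0 := by
  induction n with
  | zero => simpa using hy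
  | succ n ih =>
    rw [succ_nsmul, inf_comm]
    exact inf_add_eq_zero hy (nsmul_nonneg hx n) hx (by rwa [inf_comm]) (by rwa [inf_comm])

lemma inf_sum_eq_zero {ι : Type*} {t : Finset ι} {f : ι → E} (hx : 0 ≤ x)
    (h : ∀ i ∈ t, 0 ≤ f i ∧ x ⊓ f i = 0) : x ⊓ ∑ i ∈ t, f i = 0 :=
  (sum_induction f (fun y => 0 ≤ y ∧ x ⊓ y = 0)
    (fun _ _ hy hz => ⟨add_nonneg hy.1 hz.1, inf_add_eq_zero hx hy.1 hz.1 hy.2 hz.2⟩)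
    ⟨le_rfl, inf_eq_right.2 hx⟩ h).2

lemma add_eq_sup_of_inf_eq_zero (h : x ⊓ y = 0) : x + y = x ⊔ y := by
  simpa [h] using (inf_add_sup x y).symm

lemma IsLUB.inf_eq_zero {S : Set E} (hs : IsLUB S s) (hS : S.Nonempty)
    (hpos : ∀ x ∈ S, 0 ≤ x) (hd : 0 ≤ d) (h : ∀ x ∈ S, x ⊓ d = 0) : s ⊓ d = 0 := by
  obtain ⟨x₀, hx₀⟩ := hS
  have ht : 0 ≤ s ⊓ d := le_inf ((hpos x₀ hx₀).trans (hs.1 hx₀)) hd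
  -- each `x ∈ S` is disjoint from `s ⊓ d`, so `x + s ⊓ d = x ⊔ (s ⊓ d) ≤ s`
  have hub : s - s ⊓ d ∈ upperBounds S := fun x hx => by
    have hxt : x ⊓ (s ⊓ d) = 0 :=
      le_antisymm ((inf_le_inf_left x inf_le_right).trans_eq (h x hx)) (le_inf (hpos x hx) ht)
    rw [le_sub_iff_add_le, add_eq_sup_of_inf_eq_zero hxt]
    exact sup_le (hs.1 hx) inf_le_left
  exact le_antisymm ((le_sub_self_iff s).1 (hs.2 hub)) ht

lemma nonpos_of_isLUB_range_nsmul {σ : E} (h : IsLUB (Set.range fun n : ℕ => n • w) σ) :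
    w ≤ 0 := by
  refine (le_sub_self_iff σ).1 (h.2 ?_)
  rintro _ ⟨n, rfl⟩
  exact le_sub_iff_add_le.2 ((succ_nsmul w n).symm.trans_le (h.1 ⟨n + 1, rfl⟩))

lemma nsmul_le_of_le_posPart (ha : 0 ≤ a) (hw : 0 ≤ w) (n : ℕ) (h : w ≤ (a - n • w)⁺) :
    n • w ≤ a := by
  have hwr : w ⊓ (a - n • w)⁻ = 0 :=
    le_antisymm ((inf_le_inf_right _ h).trans_eq (posPart_inf_negPart_eq_zero _))
      (le_inf hw (negPart_nonneg _))
  have hr : (a - n • w)⁻ ≤ n • w := by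
    rw [negPart_def, neg_sub]
    exact sup_le (sub_le_self _ ha) (nsmul_nonneg hw n)
  have hr0 : (a - n • w)⁻ = 0 := by
    rw [← inf_eq_left.2 hr, inf_comm]
    exact nsmul_inf_eq_zero hw (negPart_nonneg _) hwr n
  exact sub_nonneg.1 (negPart_eq_zero.1 hr0)

lemma IsComponent.le (h : IsComponent d a) : d ≤ a := sub_nonneg.1 (h ▸ inf_le_right)

lemma IsComponent.trans (hd : IsComponent d b) (hb : IsComponent b a) : IsComponent d a := by
  have hda : d ⊓ (a - b) = 0 :=
    le_antisymm ((inf_le_inf_right _ hd.le).trans_eq hb) (le_inf hd.nonneg (sub_nonneg.2 hb.le))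
  rw [IsComponent, ← sub_add_sub_cancel a b d]
  exact inf_add_eq_zero hd.nonneg (sub_nonneg.2 hb.le) (sub_nonneg.2 hd.le) hda hd

/-- The projection `u = sup_n (a ⊓ n • p)` of `a` onto the band generated by `p`. -/
lemma exists_isComponent_ge_of_dedekindComplete (hE : DedekindComplete E) (hp : 0 ≤ p)
    (hpa : p ≤ a) :
    ∃ u, IsComponent u a ∧ p ≤ u ∧ ∀ d, 0 ≤ d → p ⊓ d = 0 → u ⊓ d = 0 := by
  have ha : 0 ≤ a := hp.trans hpa
  set T := Set.range fun n : ℕ => a ⊓ n • p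
  have hTne : T.Nonempty := Set.range_nonempty _
  have hTpos : ∀ x ∈ T, 0 ≤ x :=
    Set.forall_mem_range.2 fun n => le_inf ha (nsmul_nonneg hp n)
  have hTa : a ∈ upperBounds T := Set.forall_mem_range.2 fun n => inf_le_left
  have hTdisj : ∀ d, 0 ≤ d → p ⊓ d = 0 → ∀ x ∈ T, x ⊓ d = 0 := fun d hd hpd =>
    Set.forall_mem_range.2 fun n => le_antisymm
      ((inf_le_inf_right d inf_le_right).trans_eq (nsmul_inf_eq_zero hp hd hpd n))
      (le_inf (hTpos _ ⟨n, rfl⟩) hd)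
  obtain ⟨u, hu⟩ := hE T hTne ⟨a, hTa⟩
  have hua : u ≤ a := hu.2 hTa
  have hpu : p ≤ u := hu.1 ⟨1, by simpa using hpa⟩
  have hw : (a - u) ⊓ p = 0 := by
    set w := (a - u) ⊓ p
    have hw0 : 0 ≤ w := le_inf (sub_nonneg.2 hua) hp
    have hnw : ∀ n : ℕ, n • w ≤ a := fun n => by
      refine nsmul_le_of_le_posPart ha hw0 n ?_
      have hu' : a ⊓ n • w ≤ u :=
        (inf_le_inf_left a (nsmul_le_nsmul_right inf_le_right n)).trans (hu.1 ⟨n, rfl⟩)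
      calc w ≤ a - u := inf_le_left
        _ ≤ a - a ⊓ n • w := sub_le_sub_left hu' a
        _ = (a - n • w)⁺ := by rw [sub_inf, sub_self, sup_comm, posPart_def]
    obtain ⟨σ, hσ⟩ := hE _ (Set.range_nonempty _) ⟨a, Set.forall_mem_range.2 hnw⟩
    exact le_antisymm (nonpos_of_isLUB_range_nsmul hσ) hw0
  refine ⟨u, ?_, hpu, fun d hd hpd => hu.inf_eq_zero hTne hTpos hd (hTdisj d hd hpd)⟩
  rw [inf_comm] at hw
  exact hu.inf_eq_zero hTne hTpos (sub_nonneg.2 hua) (hTdisj _ (sub_nonneg.2 hua) hw)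

lemma bddAbove_of_laterallyIncreasing (hE : DedekindComplete E)
    (hU : ∀ A : Set E, A.Nonempty → (∀ x ∈ A, 0 ≤ x) →
      A.Pairwise (fun a b => a ⊓ b = 0) → ∃ s : E, IsLUB A s)
    {A : Set E} (hA : A.Nonempty) (hpos : ∀ x ∈ A, 0 ≤ x) (hdir : DirectedOn (· ≤ ·) A)
    (hlat : ∀ a ∈ A, ∀ b ∈ A, b ≤ a → (a - b) ⊓ b = 0) : BddAbove A := by
  have : Std.Symm fun x y : E => x ⊓ y = 0 := ⟨fun x y h => by rwa [inf_comm]⟩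
  obtain ⟨D, hDsub, hDdisj, hDmax⟩ :=
    Set.exists_maximal_pairwise_subset (r := fun x y : E => x ⊓ y = 0)
      {d | ∃ a ∈ A, IsComponent d a}
  have hDpos : ∀ d ∈ D, 0 ≤ d := fun d hd => by
    obtain ⟨_, _, hd⟩ := hDsub hd
    exact hd.nonneg
  obtain ⟨a₀, ha₀⟩ := hA
  have h0D : (0 : E) ∈ D :=
    hDmax 0 ⟨a₀, ha₀, by simpa [IsComponent] using hpos a₀ ha₀⟩ fun d hd => by
      simpa using hDpos d hd
  obtain ⟨s, hs⟩ := hU D ⟨0, h0D⟩ hDpos hDdisj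
  refine ⟨s, fun a ha => ?_⟩
  have hpa : (a - s)⁺ ≤ a := sup_le (sub_le_self a (hs.1 h0D)) (hpos a ha)
  have hpD : ∀ d ∈ D, (a - s)⁺ ⊓ d = 0 := fun d hd => by
    obtain ⟨b, hb, hdb⟩ := hDsub hd
    obtain ⟨c, hc, hac, hbc⟩ := hdir a ha b hb
    have hbc' : IsComponent b c := by rw [IsComponent, inf_comm]; exact hlat c hc b hb hbc
    have hdc : IsComponent d c := hdb.trans hbc'
    have hpc : (a - s)⁺ ≤ c - d := sup_le (sub_le_sub hac (hs.1 hd)) (sub_nonneg.2 hdc.le)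
    refine le_antisymm ?_ (le_inf (posPart_nonneg _) (hDpos d hd))
    rw [IsComponent, inf_comm] at hdc
    exact (inf_le_inf_right d hpc).trans_eq hdc
  obtain ⟨u, hua, hpu, huD⟩ :=
    exists_isComponent_ge_of_dedekindComplete hE (posPart_nonneg _) hpa
  have huD' : ∀ d ∈ D, u ⊓ d = 0 := fun d hd => huD d (hDpos d hd) (hpD d hd)
  have hu : u = 0 := by simpa using huD' u (hDmax u ⟨a, ha, hua⟩ huD')
  exact sub_nonpos.1 (posPart_eq_zero.1 (le_antisymm (hu ▸ hpu) (posPart_nonneg _)))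

section PairwiseDisjoint

variable {A : Set E} (hpos : ∀ x ∈ A, 0 ≤ x) (hdisj : A.Pairwise (fun a b => a ⊓ b = 0))
include hpos hdisj

lemma sum_inf_sum_eq_zero {F G : Finset E} (hF : ↑F ⊆ A) (hG : ↑G ⊆ A)
    (hFG : Disjoint F G) : (∑ x ∈ F, x) ⊓ ∑ y ∈ G, y = 0 := by
  have hFpos : 0 ≤ ∑ x ∈ F, x := sum_nonneg fun x hx => hpos x (hF hx)
  refine inf_sum_eq_zero hFpos fun y hy => ⟨hpos y (hG hy), ?_⟩
  rw [inf_comm]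
  exact inf_sum_eq_zero (hpos y (hG hy)) fun x hx =>
    ⟨hpos x (hF hx), hdisj (hG hy) (hF hx) fun hyx => disjoint_left.1 hFG (hyx ▸ hx) hy⟩

lemma sum_le_of_forall_le {F : Finset E} (hF : ↑F ⊆ A) {t : E} (ht : 0 ≤ t)
    (hFt : ∀ x ∈ F, x ≤ t) : ∑ x ∈ F, x ≤ t := by
  classical
  induction F using Finset.induction_on with
  | empty => simpa using ht
  | insert x F hxF ih =>
    have hx : ↑({x} : Finset E) ⊆ A := by simpa using hF (mem_insert_self x F)
    have hF' : ↑F ⊆ A := fun y hy => hF (mem_insert_of_mem hy)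
    have hxF' : x ⊓ ∑ y ∈ F, y = 0 := by
      simpa using sum_inf_sum_eq_zero hpos hdisj hx hF' (disjoint_singleton_left.2 hxF)
    rw [sum_insert hxF, add_eq_sup_of_inf_eq_zero hxF']
    exact sup_le (hFt x (mem_insert_self x F))
      (ih hF' fun y hy => hFt y (mem_insert_of_mem hy))

lemma sub_sum_inf_sum_eq_zero {F G : Finset E} (hF : ↑F ⊆ A) (hG : ↑G ⊆ A)
    (hle : ∑ y ∈ G, y ≤ ∑ x ∈ F, x) : (∑ x ∈ F, x - ∑ y ∈ G, y) ⊓ ∑ y ∈ G, y = 0 := by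
  classical
  have hsub : ∀ {H K : Finset E}, ↑H ⊆ A → ↑(H \ K) ⊆ A ∧ ↑(H ∩ K) ⊆ A := fun hH =>
    ⟨fun x hx => hH (mem_sdiff.1 hx).1, fun x hx => hH (mem_inter.1 hx).1⟩
  rw [← sum_inter_add_sum_sdiff F G, ← sum_inter_add_sum_sdiff G F,
    inter_comm G F] at hle ⊢
  -- the part of `G` outside `F` is disjoint from, and below, the part of `F` outside `G`
  have hGF : ∑ y ∈ G \ F, y = 0 := by
    rw [← inf_eq_left.2 (le_of_add_le_add_left hle)]
    exact sum_inf_sum_eq_zero hpos hdisj (hsub hG).1 (hsub hF).1 disjoint_sdiff_sdiff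
  rw [hGF, add_zero, add_sub_cancel_left]
  exact sum_inf_sum_eq_zero hpos hdisj (hsub hF).1 (hsub hF).2 (disjoint_sdiff_inter F G)

lemma exists_isLUB_of_pairwise_inf_eq_zero
    (hL : ∀ A : Set E, A.Nonempty → (∀ x ∈ A, 0 ≤ x) → DirectedOn (· ≤ ·) A →
      (∀ a ∈ A, ∀ b ∈ A, b ≤ a → (a - b) ⊓ b = 0) → ∃ s : E, IsLUB A s)
    (hA : A.Nonempty) : ∃ s : E, IsLUB A s := by
  classical
  set B := (fun F : Finset E => ∑ x ∈ F, x) '' {F | ↑F ⊆ A}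
  have hAB : A ⊆ B := fun a ha => ⟨{a}, by simpa using ha, sum_singleton id a⟩
  have hBpos : ∀ x ∈ B, 0 ≤ x := by
    rintro _ ⟨F, hF, rfl⟩
    exact sum_nonneg fun x hx => hpos x (hF hx)
  have hBdir : DirectedOn (· ≤ ·) B := by
    rintro _ ⟨F, hF, rfl⟩ _ ⟨G, hG, rfl⟩
    have hFG : ↑(F ∪ G) ⊆ A := by simpa using Set.union_subset hF hG
    have hle : ∀ H ⊆ F ∪ G, ∑ x ∈ H, x ≤ ∑ x ∈ F ∪ G, x := fun H hH =>
      sum_le_sum_of_subset_of_nonneg hH fun x hx _ => hpos x (hFG hx)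
    exact ⟨_, ⟨F ∪ G, hFG, rfl⟩, hle F subset_union_left, hle G subset_union_right⟩
  have hBlat : ∀ a ∈ B, ∀ b ∈ B, b ≤ a → (a - b) ⊓ b = 0 := by
    rintro _ ⟨F, hF, rfl⟩ _ ⟨G, hG, rfl⟩ hle
    exact sub_sum_inf_sum_eq_zero hpos hdisj hF hG hle
  obtain ⟨s, hs⟩ := hL B (hA.mono hAB) hBpos hBdir hBlat
  refine ⟨s, (isLUB_congr (Set.Subset.antisymm (upperBounds_mono_set hAB) ?_)).1 hs⟩
  intro t ht
  obtain ⟨a₀, ha₀⟩ := hA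
  rintro _ ⟨F, hF, rfl⟩
  exact sum_le_of_forall_le hpos hdisj hF ((hpos a₀ ha₀).trans (ht ha₀)) fun x hx => ht (hF hx)

end PairwiseDisjoint

end LatticeOrderedAddCommGroup

theorem universallyComplete_iff_laterallyIncreasing_sup_general
    {E : Type*} [Lattice E] [AddCommGroup E]
    [CovariantClass E E (· + ·) (· ≤ ·)]
    (hDC : ∀ A : Set E, A.Nonempty → BddAbove A → ∃ s : E, IsLUB A s) :
    (∀ A : Set E, A.Nonempty → (∀ x ∈ A, 0 ≤ x) →
        A.Pairwise (fun a b => a ⊓ b = 0) → ∃ s : E, IsLUB A s) ↔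
      (∀ A : Set E, A.Nonempty → (∀ x ∈ A, 0 ≤ x) → DirectedOn (· ≤ ·) A →
        (∀ a ∈ A, ∀ b ∈ A, b ≤ a → (a - b) ⊓ b = 0) → ∃ s : E, IsLUB A s) :=
  ⟨fun hU A hA hpos hdir hlat =>
      hDC A hA (bddAbove_of_laterallyIncreasing hDC hU hA hpos hdir hlat),
    fun hL _ hA hpos hdisj => exists_isLUB_of_pairwise_inf_eq_zero hpos hdisj hL hA⟩

theorem universallyComplete_iff_laterallyIncreasing_sup
    {E : Type*} [Lattice E] [AddCommGroup E] [Module ℝ E]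
    [CovariantClass E E (· + ·) (· ≤ ·)] [PosSMulMono ℝ E]
    (hDC : ∀ A : Set E, A.Nonempty → BddAbove A → ∃ s : E, IsLUB A s) :
    (∀ A : Set E, A.Nonempty → (∀ x ∈ A, 0 ≤ x) →
        A.Pairwise (fun a b => a ⊓ b = 0) → ∃ s : E, IsLUB A s) ↔
      (∀ A : Set E, A.Nonempty → (∀ x ∈ A, 0 ≤ x) → DirectedOn (· ≤ ·) A →
        (∀ a ∈ A, ∀ b ∈ A, b ≤ a → (a - b) ⊓ b = 0) → ∃ s : E, IsLUB A s) :=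
  universallyComplete_iff_laterallyIncreasing_sup_general hDC
end

section
/- Let F be a Banach lattice and let (e_n)_{n≥1} be a sequence of pairwise disjoint positive elements of F such that ‖Σ_{n∈σ} e_n‖ ≤ 1 for every finite subset σ ⊆ ℕ, but the set {e_n : n ∈ ℕ} is not bounded above in F. Then there exists a continuous linear operator S : L¹[0,2π] → F with ‖S‖ ≤ 1 (namely Sf = Σ_{n=1}^∞ (∫_0^{2π} f(t)cos(nt) dt) e_n, the series converging in norm) which is not regular. -/
open MeasureTheory Real in
/-- The measure on `ℝ` giving the Banach lattice `L¹[0, 2π]` as `Lp ℝ 1 μ2π`. -/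
noncomputable def μ2π : Measure ℝ := volume.restrict (Set.Icc (0 : ℝ) (2 * π))

/-!
The partial sums of `∑ aₙ eₙ` lie between `∓ (sup |aₙ|) • ∑ eₙ`, so solidity of the norm gives
`‖∑_{n ∈ σ} aₙ eₙ‖ ≤ sup_{n ∈ σ} |aₙ|`. For the cosine coefficients `aₙ` of `f ∈ L¹`, which are
bounded by `‖f‖` and tend to `0` by the Riemann–Lebesgue lemma, the series therefore converges
unconditionally and defines an operator `S` of norm at most `1`. The functions `cos ((k + 1) t)`
all lie in the order interval `[-1, 1]` of `L¹` and, by orthogonality, `S` maps them to `π eₖ`.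
A regular operator maps order intervals to sets bounded above, so `{eₖ}` would be bounded above.
-/

open MeasureTheory Real Filter Topology FourierTransform

lemma nonneg_of_two_pow_nsmul_nonneg {α : Type*} [AddCommGroup α] [Lattice α]
    [IsOrderedAddMonoid α] {y : α} : ∀ k : ℕ, 0 ≤ 2 ^ k • y → 0 ≤ y
  | 0, h => by simpa using h
  | k + 1, h => nonneg_of_two_pow_nsmul_nonneg k <|
      nsmul_two_semiclosed <| by rwa [pow_succ, mul_nsmul] at h

section SolidNorm
variable {G : Type*} [NormedAddCommGroup G] [Lattice G] [HasSolidNorm G] [IsOrderedAddMonoid G]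
  [NormedSpace ℝ G]

/-- The positive cone is closed, so positivity of `r • x` passes from the dyadic
approximations `⌊2 ^ k r⌋₊ / 2 ^ k` of `r` to `r`. -/
instance HasSolidNorm.isOrderedModule : IsOrderedModule ℝ G :=
  .of_smul_nonneg fun r hr x hx => by
    have hdyadic (k : ℕ) : 0 ≤ ((⌊r * 2 ^ k⌋₊ : ℝ) / 2 ^ k) • x := by
      refine nonneg_of_two_pow_nsmul_nonneg k ?_
      rw [← Nat.cast_smul_eq_nsmul ℝ, smul_smul, Nat.cast_pow, Nat.cast_ofNat,
        mul_div_cancel₀ _ (by positivity), Nat.cast_smul_eq_nsmul]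
      exact nsmul_nonneg hx _
    have hlim : Tendsto (fun k : ℕ => (⌊r * 2 ^ k⌋₊ : ℝ) / 2 ^ k) atTop (𝓝 r) :=
      (tendsto_nat_floor_mul_div_atTop hr).comp (tendsto_pow_atTop_atTop_of_one_lt one_lt_two)
    exact isClosed_nonneg.mem_of_tendsto (hlim.smul_const x) (.of_forall hdyadic)

lemma norm_sum_smul_le_mul_norm_sum {ι : Type*} {e : ι → G} {a : ι → ℝ} {σ : Finset ι} {M : ℝ}
    (he : ∀ i ∈ σ, 0 ≤ e i) (hM : 0 ≤ M) (ha : ∀ i ∈ σ, |a i| ≤ M) :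
    ‖∑ i ∈ σ, a i • e i‖ ≤ M * ‖∑ i ∈ σ, e i‖ := by
  have habs : |∑ i ∈ σ, a i • e i| ≤ |M • ∑ i ∈ σ, e i| := by
    rw [abs_of_nonneg (smul_nonneg hM (Finset.sum_nonneg he)), abs_le', Finset.smul_sum,
      ← Finset.sum_neg_distrib]
    refine ⟨Finset.sum_le_sum fun i hi => ?_, Finset.sum_le_sum fun i hi => ?_⟩
    · exact smul_le_smul_of_nonneg_right ((le_abs_self _).trans (ha i hi)) (he i hi)
    · rw [← neg_smul]
      exact smul_le_smul_of_nonneg_right ((neg_le_abs _).trans (ha i hi)) (he i hi)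
  rw [← Real.norm_of_nonneg hM, ← norm_smul]
  exact HasSolidNorm.solid habs

section Series
variable {ι : Type*} {e : ι → G}

lemma summable_smul_of_tendsto_cofinite_zero [CompleteSpace G] (he : ∀ i, 0 ≤ e i)
    (hsum : ∀ σ : Finset ι, ‖∑ i ∈ σ, e i‖ ≤ 1) {a : ι → ℝ}
    (ha : Tendsto a cofinite (𝓝 0)) : Summable fun i => a i • e i := by
  refine summable_iff_vanishing_norm.2 fun ε hε => ?_
  have hsmall : ∀ᶠ i in cofinite, |a i| ≤ ε / 2 :=
    (Metric.tendsto_nhds.1 ha _ (half_pos hε)).mono fun i hi => by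
      rw [Real.dist_eq, sub_zero] at hi
      exact hi.le
  refine ⟨hsmall.toFinset, fun t ht => ?_⟩
  have hat : ∀ i ∈ t, |a i| ≤ ε / 2 := fun i hi => by
    by_contra h
    exact Finset.disjoint_left.1 ht hi (hsmall.mem_toFinset.2 h)
  calc ‖∑ i ∈ t, a i • e i‖ ≤ ε / 2 * ‖∑ i ∈ t, e i‖ :=
        norm_sum_smul_le_mul_norm_sum (fun i _ => he i) (by positivity) hat
    _ ≤ ε / 2 := mul_le_of_le_one_right (by positivity) (hsum t)
    _ < ε := half_lt_self hε

lemma norm_tsum_smul_le (he : ∀ i, 0 ≤ e i) (hsum : ∀ σ : Finset ι, ‖∑ i ∈ σ, e i‖ ≤ 1)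
    {a : ι → ℝ} {M : ℝ} (hM : 0 ≤ M) (ha : ∀ i, |a i| ≤ M)
    (hs : Summable fun i => a i • e i) : ‖∑' i, a i • e i‖ ≤ M :=
  le_of_tendsto' hs.hasSum.norm fun σ =>
    (norm_sum_smul_le_mul_norm_sum (fun i _ => he i) hM fun i _ => ha i).trans
      (mul_le_of_le_one_right hM (hsum σ))

theorem exists_clm_hasSum_smul [CompleteSpace G] {E : Type*} [NormedAddCommGroup E]
    [NormedSpace ℝ E] (he : ∀ i, 0 ≤ e i) (hsum : ∀ σ : Finset ι, ‖∑ i ∈ σ, e i‖ ≤ 1)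
    (φ : ι → StrongDual ℝ E) (hφ : ∀ i, ‖φ i‖ ≤ 1)
    (hφ0 : ∀ x, Tendsto (fun i => φ i x) cofinite (𝓝 0)) :
    ∃ S : E →L[ℝ] G, ‖S‖ ≤ 1 ∧ ∀ x, HasSum (fun i => φ i x • e i) (S x) := by
  have hs (x : E) := summable_smul_of_tendsto_cofinite_zero he hsum (hφ0 x)
  let S : E →ₗ[ℝ] G :=
    { toFun x := ∑' i, φ i x • e i
      map_add' x y := by simp only [map_add, add_smul, (hs x).tsum_add (hs y)]
      map_smul' r x := by
        simp only [map_smul, smul_eq_mul, mul_smul, RingHom.id_apply, tsum_const_smul''] }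
  refine ⟨S.mkContinuous 1 fun x => ?_, LinearMap.mkContinuous_norm_le _ zero_le_one _,
    fun x => (hs x).hasSum⟩
  rw [one_mul]
  exact norm_tsum_smul_le he hsum (norm_nonneg x)
    (fun i => by simpa using (φ i).le_of_opNorm_le (hφ i) x) (hs x)

end Series
end SolidNorm

section RegularOp
variable {E F : Type*} [NormedAddCommGroup E] [NormedSpace ℝ E] [Lattice E] [IsOrderedAddMonoid E]
  [NormedAddCommGroup F] [NormedSpace ℝ F] [Lattice F] [IsOrderedAddMonoid F]

lemma IsPositiveOp.monotone {P : E →L[ℝ] F} (hP : IsPositiveOp P) : Monotone P := fun x y hxy =>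
  sub_nonneg.1 <| by simpa only [map_sub] using hP (y - x) (sub_nonneg.2 hxy)

lemma IsRegularOp.bddAbove_image_Icc {T : E →L[ℝ] F} (hT : IsRegularOp T) (a b : E) :
    BddAbove (T '' Set.Icc a b) := by
  obtain ⟨P, Q, hP, hQ, rfl⟩ := hT
  refine ⟨P b - Q a, ?_⟩
  rintro _ ⟨x, ⟨hax, hxb⟩, rfl⟩
  exact sub_le_sub (hP.monotone hxb) (hQ.monotone hax)

end RegularOp

lemma integral_cos_int_mul (m : ℤ) :
    ∫ x in 0..2 * π, cos (m * x) = if m = 0 then 2 * π else 0 := by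
  split_ifs with hm
  · simp [hm]
  · have hm' : (m : ℝ) ≠ 0 := Int.cast_ne_zero.2 hm
    rw [intervalIntegral.integral_comp_mul_left (fun x => cos x) hm', integral_cos, mul_zero,
      sin_zero, sub_zero, ← mul_assoc, mul_comm (m : ℝ) 2, ← Int.cast_two (R := ℝ),
      ← Int.cast_mul, sin_int_mul_pi, smul_zero]

lemma integral_cos_nat_mul_mul_cos_nat_mul {a b : ℕ} (ha : a ≠ 0) :
    ∫ x in 0..2 * π, cos (a * x) * cos (b * x) = if a = b then π else 0 := by
  have hprod (x : ℝ) : cos (a * x) * cos (b * x) =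
      (cos (((a - b : ℤ) : ℝ) * x) + cos (((a + b : ℤ) : ℝ) * x)) / 2 := by
    push_cast
    rw [sub_mul, add_mul, ← two_mul_cos_mul_cos]
    ring
  have hcont (m : ℤ) : Continuous fun x : ℝ => cos (m * x) := by fun_prop
  simp_rw [hprod]
  rw [intervalIntegral.integral_div, intervalIntegral.integral_add
    ((hcont _).intervalIntegrable _ _) ((hcont _).intervalIntegrable _ _), integral_cos_int_mul,
    integral_cos_int_mul, if_neg (show (a + b : ℤ) ≠ 0 by omega)]
  by_cases hab : a = b
  · rw [if_pos (by omega), if_pos hab]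
    ring
  · rw [if_neg (by omega), if_neg hab]
    ring

lemma tendsto_integral_mul_cos_atTop {g : ℝ → ℝ} (hg : Integrable g) :
    Tendsto (fun c => ∫ t, g t * cos (c * t)) atTop (𝓝 0) := by
  have hRL := Complex.continuous_re.tendsto 0 |>.comp <|
    (Real.tendsto_integral_exp_smul_cocompact fun t => (g t : ℂ)).comp <|
      (tendsto_id.atTop_div_const two_pi_pos).mono_right atTop_le_cocompact
  rw [Complex.zero_re] at hRL
  refine hRL.congr fun c => ?_
  have hint : Integrable fun v : ℝ => 𝐞 (-(v * (c / (2 * π)))) • (g v : ℂ) :=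
    (Real.fourierIntegral_convergent_iff' (.mul ℝ ℝ) _).2 (hg.ofReal (𝕜 := ℂ))
  simp only [Function.comp_apply, id]
  rw [← RCLike.re_eq_complex_re, ← integral_re hint]
  congr 1 with t
  rw [Circle.smul_def, Real.fourierChar_apply]
  have harg : 2 * π * -(t * (c / (2 * π))) = -(c * t) := by field_simp
  rw [harg, smul_eq_mul, RCLike.re_eq_complex_re, Complex.re_mul_ofReal,
    Complex.exp_ofReal_mul_I_re, cos_neg, mul_comm]

lemma tendsto_setIntegral_mul_cos_atTop {g : ℝ → ℝ} {s : Set ℝ} (hs : MeasurableSet s)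
    (hg : IntegrableOn g s) : Tendsto (fun c => ∫ t in s, g t * cos (c * t)) atTop (𝓝 0) := by
  refine (tendsto_integral_mul_cos_atTop (hg.integrable_indicator hs)).congr fun c => ?_
  rw [← integral_indicator hs]
  congr 1 with t
  exact (Set.indicator_mul_left s g fun t => cos (c * t)).symm

section CosineCoefficients
variable {μ : Measure ℝ}

lemma integrable_mul_cos {g : ℝ → ℝ} (hg : Integrable g μ) (c : ℝ) :
    Integrable (fun t => g t * cos (c * t)) μ :=
  hg.mul_bdd (by fun_prop) (ae_of_all _ fun t => by simpa using abs_cos_le_one (c * t))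

variable (μ) in
noncomputable def cosIntegralCLM (c : ℝ) : StrongDual ℝ (Lp ℝ 1 μ) :=
  LinearMap.mkContinuous
    { toFun f := ∫ t, f t * cos (c * t) ∂μ
      map_add' f g := by
        rw [← integral_add (integrable_mul_cos (L1.integrable_coeFn f) c)
          (integrable_mul_cos (L1.integrable_coeFn g) c)]
        exact integral_congr_ae <| (Lp.coeFn_add f g).mono fun t ht => by
          simp only [ht, Pi.add_apply, add_mul]
      map_smul' r f := by
        rw [RingHom.id_apply, smul_eq_mul, ← integral_const_mul]
        exact integral_congr_ae <| (Lp.coeFn_smul r f).mono fun t ht => by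
          simp only [ht, Pi.smul_apply, smul_eq_mul, mul_assoc] }
    1 fun f => by
      rw [one_mul, L1.norm_eq_integral_norm]
      refine norm_integral_le_of_norm_le (L1.integrable_coeFn f).norm (ae_of_all _ fun t => ?_)
      simpa only [norm_mul] using
        mul_le_of_le_one_right (norm_nonneg _) (by simpa using abs_cos_le_one (c * t))

lemma cosIntegralCLM_apply (c : ℝ) (f : Lp ℝ 1 μ) :
    cosIntegralCLM μ c f = ∫ t, f t * cos (c * t) ∂μ := rfl

lemma norm_cosIntegralCLM_le (c : ℝ) : ‖cosIntegralCLM μ c‖ ≤ 1 :=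
  LinearMap.mkContinuous_norm_le _ zero_le_one _

lemma tendsto_cosIntegralCLM_atTop {s : Set ℝ} (hs : MeasurableSet s)
    (f : Lp ℝ 1 (volume.restrict s)) :
    Tendsto (fun c => cosIntegralCLM (volume.restrict s) c f) atTop (𝓝 0) :=
  tendsto_setIntegral_mul_cos_atTop hs (L1.integrable_coeFn f)

lemma memLp_cos_mul [IsFiniteMeasure μ] (c : ℝ) : MemLp (fun t => cos (c * t)) 1 μ :=
  .of_bound (by fun_prop) 1 (ae_of_all _ fun t => by simpa using abs_cos_le_one (c * t))

variable (μ) in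
noncomputable def cosLp [IsFiniteMeasure μ] (c : ℝ) : Lp ℝ 1 μ := (memLp_cos_mul c).toLp

lemma coeFn_cosLp [IsFiniteMeasure μ] (c : ℝ) : cosLp μ c =ᵐ[μ] fun t => cos (c * t) :=
  (memLp_cos_mul c).coeFn_toLp

lemma cosLp_mem_Icc [IsFiniteMeasure μ] (c : ℝ) :
    cosLp μ c ∈ Set.Icc (Lp.const 1 μ (-1)) (Lp.const 1 μ 1) := by
  constructor <;> refine (Lp.coeFn_le _ _).1 ?_ <;>
    filter_upwards [Lp.coeFn_const (p := 1) (μ := μ) (-1 : ℝ),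
      Lp.coeFn_const (p := 1) (μ := μ) (1 : ℝ), coeFn_cosLp c] with t hm hp hc
  · rw [hm, hc]; exact neg_one_le_cos _
  · rw [hp, hc]; exact cos_le_one _

end CosineCoefficients

instance isFiniteMeasure_μ2π : IsFiniteMeasure μ2π := by
  unfold μ2π
  infer_instance

lemma integral_μ2π (g : ℝ → ℝ) : ∫ t, g t ∂μ2π = ∫ t in 0..2 * π, g t := by
  rw [μ2π, intervalIntegral.integral_of_le two_pi_pos.le, integral_Icc_eq_integral_Ioc]

lemma cosIntegralCLM_cosLp (n k : ℕ) :
    cosIntegralCLM μ2π ((n : ℝ) + 1) (cosLp μ2π ((k : ℝ) + 1)) = if k = n then π else 0 := by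
  have hcos : (fun t => cosLp μ2π ((k : ℝ) + 1) t * cos (((n : ℝ) + 1) * t)) =ᵐ[μ2π]
      fun t => cos (((k + 1 : ℕ) : ℝ) * t) * cos (((n + 1 : ℕ) : ℝ) * t) :=
    (coeFn_cosLp ((k : ℝ) + 1)).mono fun t ht => by simp only [ht, Nat.cast_succ]
  rw [cosIntegralCLM_apply, integral_congr_ae hcos, integral_μ2π,
    integral_cos_nat_mul_mul_cos_nat_mul k.succ_ne_zero]
  simp only [Nat.succ_inj]

lemma hasSum_cosIntegralCLM_cosLp_smul {M : Type*} [AddCommMonoid M] [Module ℝ M]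
    [TopologicalSpace M] (e : ℕ → M) (k : ℕ) :
    HasSum (fun n : ℕ => cosIntegralCLM μ2π ((n : ℝ) + 1) (cosLp μ2π ((k : ℝ) + 1)) • e n)
      (π • e k) := by
  convert hasSum_single k fun n hn => ?_
  · rw [cosIntegralCLM_cosLp, if_pos rfl]
  · rw [cosIntegralCLM_cosLp, if_neg (Ne.symm hn), zero_smul]

open MeasureTheory Real Filter in
theorem exists_nonregular_operator_from_L1_general
    {F : Type*} [NormedAddCommGroup F] [Lattice F] [HasSolidNorm F] [IsOrderedAddMonoid F]
    [NormedSpace ℝ F] [CompleteSpace F]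
    (e : ℕ → F) (hpos : ∀ n, 0 ≤ e n)
    (hsum : ∀ σ : Finset ℕ, ‖∑ n ∈ σ, e n‖ ≤ 1)
    (hnub : ¬ BddAbove (Set.range e)) :
    ∃ S : Lp ℝ 1 μ2π →L[ℝ] F, ‖S‖ ≤ 1 ∧
      (∀ f : Lp ℝ 1 μ2π,
        Tendsto (fun N : ℕ => ∑ n ∈ Finset.range N,
            (∫ t, f t * cos (((n : ℝ) + 1) * t) ∂μ2π) • e n)
          atTop (nhds (S f))) ∧
      ¬ IsRegularOp S := by
  have hcoeff (f : Lp ℝ 1 μ2π) :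
      Tendsto (fun n : ℕ => cosIntegralCLM μ2π ((n : ℝ) + 1) f) cofinite (𝓝 0) := by
    rw [Nat.cofinite_eq_atTop]
    exact (tendsto_cosIntegralCLM_atTop measurableSet_Icc f).comp
      (tendsto_atTop_add_const_right _ 1 tendsto_natCast_atTop_atTop)
  obtain ⟨S, hS_norm, hS⟩ := exists_clm_hasSum_smul hpos hsum _
    (fun n => norm_cosIntegralCLM_le _) hcoeff
  refine ⟨S, hS_norm, fun f => (hS f).tendsto_sum_nat, fun hreg => hnub ?_⟩
  obtain ⟨B, hB⟩ := hreg.bddAbove_image_Icc (Lp.const 1 μ2π (-1)) (Lp.const 1 μ2π 1)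
  refine ⟨B, Set.forall_mem_range.2 fun k => ?_⟩
  calc e k ≤ π • e k := le_smul_of_one_le_left (hpos k) (one_le_two.trans two_le_pi)
    _ = S (cosLp μ2π ((k : ℝ) + 1)) := (hasSum_cosIntegralCLM_cosLp_smul e k).unique (hS _)
    _ ≤ B := hB (Set.mem_image_of_mem S (cosLp_mem_Icc _))

open MeasureTheory Real Filter in
theorem exists_nonregular_operator_from_L1
    {F : Type*} [NormedAddCommGroup F] [Lattice F] [HasSolidNorm F] [IsOrderedAddMonoid F]
    [NormedSpace ℝ F] [CompleteSpace F]
    (e : ℕ → F) (hpos : ∀ n, 0 ≤ e n)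
    (hdisj : ∀ m n, m ≠ n → e m ⊓ e n = 0)
    (hsum : ∀ σ : Finset ℕ, ‖∑ n ∈ σ, e n‖ ≤ 1)
    (hnub : ¬ BddAbove (Set.range e)) :
    ∃ S : Lp ℝ 1 μ2π →L[ℝ] F, ‖S‖ ≤ 1 ∧
      (∀ f : Lp ℝ 1 μ2π,
        Tendsto (fun N : ℕ => ∑ n ∈ Finset.range N,
            (∫ t, f t * cos (((n : ℝ) + 1) * t) ∂μ2π) • e n)
          atTop (nhds (S f))) ∧
      ¬ IsRegularOp S :=
  exists_nonregular_operator_from_L1_general e hpos hsum hnub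
end
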